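/- arXiv:1310.8151 — 3 statements merged into one kernel-verified Lean document; each statement's English description precedes it below -/
import Mathlib

section
/- If a matrix h ∈ GL(3,ℤ) has finite order n, then n ≤ 6. Consequently, any subgroup of GL(3,ℤ) all of whose elements have finite order is a finite group. -/
/-!
A matrix `g ∈ GL₃(ℤ)` with `g ^ n = 1` has, over `ℚ`, a minimal polynomial dividing
`X ^ n - 1 = ∏_{d ∣ n} Φ_d`, hence equal to a product of distinct cyclotomic polynomials of total
degree `∑ φ(d) ≤ 3`. The only `d` with `φ(d) ≤ 3` are `1, 2, 3, 4, 6`, and `4` cannot occur together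
with `3` or `6`, so `g ^ 4 = 1` or `g ^ 6 = 1`.

For the second part, reduction modulo `3` is injective on a torsion subgroup, by Minkowski's
argument. Let `ℓ ≥ 3` be prime and `g = 1 + ℓ ^ k D` (`k ≥ 1`) of prime order `q`. In
`(1 + ℓ ^ k D) ^ q = 1` the linear term `q ℓ ^ k D` is cancelled by terms divisible by
`ℓ ^ (k + 1)`, and even by `ℓ ^ (k + 2)` when `q = ℓ` (since `ℓ ∣ choose ℓ j` for `0 < j < ℓ` and
`k ℓ ≥ k + 2`); either way `ℓ ∣ D`. So `g - 1` is divisible by every power of `ℓ`, i.e. `g = 1`.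
-/

open Finset
open scoped Nat

namespace Nat

theorem mem_of_totient_le_three {d : ℕ} (hd : d ≠ 0) (h : φ d ≤ 3) :
    d ∈ ({1, 2, 3, 4, 6} : Finset ℕ) := by
  have hdvd : ∀ m, m ∣ d → φ m ≤ 3 := fun m hm =>
    (Nat.le_of_dvd (totient_pos.2 (Nat.pos_of_ne_zero hd)) (totient_dvd_of_dvd hm)).trans h
  obtain ⟨a, m, hm, rfl⟩ := exists_eq_two_pow_mul_odd hd
  obtain ⟨b, r, hr3, rfl⟩ := exists_eq_pow_mul_and_not_dvd hm.pos.ne' 3 (by norm_num)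
  have hr : r = 1 := by
    by_contra hr1
    have hp := minFac_prime hr1
    have hpr : r.minFac ∣ r := minFac_dvd r
    have hp2 : r.minFac ≠ 2 := fun h2 =>
      (Nat.not_even_iff_odd.2 hm) (even_iff_two_dvd.2 (h2 ▸ hpr.trans (dvd_mul_left r _)))
    have hp3 : r.minFac ≠ 3 := fun h3 => hr3 (h3 ▸ hpr)
    have hle := hdvd _ (hpr.trans ((dvd_mul_left _ _).trans (dvd_mul_left _ _)))
    rw [totient_prime hp] at hle
    have h4 : r.minFac = 4 := by have := hp.two_le; omega
    exact absurd (h4 ▸ hp) (by decide)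
  have ha : a ≤ 2 := by
    by_contra! ha
    exact absurd (hdvd (2 ^ 3) ((pow_dvd_pow 2 ha).trans (dvd_mul_right _ _))) (by decide)
  have hb : b ≤ 1 := by
    by_contra! hb
    exact absurd (hdvd (3 ^ 2)
      ((pow_dvd_pow 3 hb).trans ((dvd_mul_right _ _).trans (dvd_mul_left _ _)))) (by decide)
  subst hr
  interval_cases a <;> interval_cases b <;> revert h <;> decide

theorem subset_divisors_four_or_six {S : Finset ℕ} (h0 : 0 ∉ S) (h : ∑ d ∈ S, φ d ≤ 3) :
    S ⊆ divisors 4 ∨ S ⊆ divisors 6 := by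
  have hS : S ∈ ({1, 2, 3, 4, 6} : Finset ℕ).powerset := mem_powerset.2 fun d hd =>
    mem_of_totient_le_three (ne_of_mem_of_not_mem hd h0)
      ((single_le_sum (fun _ _ => Nat.zero_le _) hd).trans h)
  have key : ∀ T ∈ ({1, 2, 3, 4, 6} : Finset ℕ).powerset,
      ∑ d ∈ T, φ d ≤ 3 → T ⊆ divisors 4 ∨ T ⊆ divisors 6 := by decide
  exact key S hS h

end Nat

theorem Finset.dvd_prod_filter_of_dvd_prod {ι R : Type*} [CommRing R] {s : Finset ι} {f : ι → R}
    {a : R} [DecidablePred (f · ∣ a)] (hf : ∀ i ∈ s, ¬f i ∣ a → IsCoprime (f i) a)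
    (ha : a ∣ ∏ i ∈ s, f i) : a ∣ ∏ i ∈ s with f i ∣ a, f i := by
  rw [← prod_filter_mul_prod_filter_not s (f · ∣ a)] at ha
  refine IsCoprime.dvd_of_dvd_mul_right (IsCoprime.prod_right fun i hi => ?_) ha
  rw [mem_filter] at hi
  exact (hf i hi.1 hi.2).symm

namespace Polynomial

theorem dvd_X_pow_sub_one_four_or_six {P : ℚ[X]} {n : ℕ} (hn : 0 < n)
    (hP : P ∣ X ^ n - 1) (hdeg : P.natDegree ≤ 3) : P ∣ X ^ 4 - 1 ∨ P ∣ X ^ 6 - 1 := by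
  classical
  set S := {d ∈ n.divisors | cyclotomic d ℚ ∣ P}
  have hPS : P ∣ ∏ d ∈ S, cyclotomic d ℚ := by
    refine dvd_prod_filter_of_dvd_prod (fun d hd hndvd => ?_) ?_
    · exact (cyclotomic.irreducible_rat (Nat.pos_of_mem_divisors hd)).coprime_iff_not_dvd.2 hndvd
    · rwa [prod_cyclotomic_eq_X_pow_sub_one hn]
  have hSP : ∏ d ∈ S, cyclotomic d ℚ ∣ P :=
    prod_dvd_of_coprime (fun d _ e _ hde => cyclotomic.isCoprime_rat hde)
      (fun d hd => (mem_filter.1 hd).2)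
  have hsum : ∑ d ∈ S, φ d ≤ 3 := by
    have hP0 : P ≠ 0 := ne_zero_of_dvd_ne_zero (X_pow_sub_C_ne_zero hn 1) hP
    calc ∑ d ∈ S, φ d = (∏ d ∈ S, cyclotomic d ℚ).natDegree := by
          rw [natDegree_prod _ _ fun d _ => cyclotomic_ne_zero d ℚ]
          simp only [natDegree_cyclotomic]
      _ ≤ 3 := (natDegree_le_of_dvd hSP hP0).trans hdeg
  have hdvd_of_subset : ∀ m, 0 < m → S ⊆ m.divisors → P ∣ X ^ m - 1 := fun m hm hSm => by
    rw [← prod_cyclotomic_eq_X_pow_sub_one hm]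
    exact hPS.trans (prod_dvd_prod_of_subset _ _ _ hSm)
  have h0 : 0 ∉ S := by simp [S]
  exact (Nat.subset_divisors_four_or_six h0 hsum).imp (hdvd_of_subset 4 (by norm_num))
    (hdvd_of_subset 6 (by norm_num))

end Polynomial

section OrderBound

open Polynomial

variable {A : Type*} [Ring A] [Algebra ℚ A] {x : A}

theorem pow_four_eq_one_or_pow_six_eq_one (hx : IsOfFinOrder x)
    (hdeg : (minpoly ℚ x).natDegree ≤ 3) : x ^ 4 = 1 ∨ x ^ 6 = 1 := by
  have key : ∀ k, minpoly ℚ x ∣ X ^ k - 1 ↔ x ^ k = 1 := fun k => by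
    rw [minpoly.dvd_iff, map_sub, map_pow, aeval_X, map_one, sub_eq_zero]
  obtain ⟨n, hn, hxn⟩ := hx.exists_pow_eq_one
  exact (dvd_X_pow_sub_one_four_or_six hn ((key n).2 hxn) hdeg).imp (key 4).1 (key 6).1

theorem orderOf_le_six (hx : IsOfFinOrder x) (hdeg : (minpoly ℚ x).natDegree ≤ 3) :
    orderOf x ≤ 6 := by
  rcases pow_four_eq_one_or_pow_six_eq_one hx hdeg with h | h
  · exact (orderOf_le_of_pow_eq_one (by norm_num) h).trans (by norm_num)
  · exact orderOf_le_of_pow_eq_one (by norm_num) h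

end OrderBound

theorem Matrix.natDegree_minpoly_le {n K : Type*} [Fintype n] [DecidableEq n] [Field K]
    (M : Matrix n n K) : (minpoly K M).natDegree ≤ Fintype.card n :=
  M.charpoly_natDegree_eq_dim ▸
    Polynomial.natDegree_le_of_dvd M.minpoly_dvd_charpoly M.charpoly_monic.ne_zero

theorem Matrix.GeneralLinearGroup.orderOf_le_six {n : Type*} [Fintype n] [DecidableEq n]
    (hn : Fintype.card n ≤ 3) {g : GL n ℤ} (hg : IsOfFinOrder g) : orderOf g ≤ 6 := by
  let f : GL n ℤ →* Matrix n n ℚ :=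
    (Int.castRingHom ℚ).mapMatrix.toMonoidHom.comp (Units.coeHom _)
  have hf : Function.Injective f := fun g h hgh =>
    Units.ext (Matrix.map_injective Int.cast_injective hgh)
  rw [← orderOf_injective f hf]
  exact _root_.orderOf_le_six (f.isOfFinOrder hg) ((Matrix.natDegree_minpoly_le _).trans hn)

theorem Nat.pow_succ_dvd_choose_mul_pow (ℓ q : ℕ) {k j : ℕ} (hk : 1 ≤ k) (hj : 2 ≤ j) :
    ℓ ^ (k + 1) ∣ q.choose j * ℓ ^ (k * j) :=
  dvd_mul_of_dvd_right (pow_dvd_pow ℓ (by nlinarith)) _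

theorem Nat.Prime.pow_add_two_dvd_choose_mul_pow {ℓ k j : ℕ} (hℓ : ℓ.Prime) (hℓ3 : 3 ≤ ℓ)
    (hk : 1 ≤ k) (hj : 2 ≤ j) (hjℓ : j ≤ ℓ) : ℓ ^ (k + 2) ∣ ℓ.choose j * ℓ ^ (k * j) := by
  rcases hjℓ.lt_or_eq with hjℓ | rfl
  · rw [pow_succ']
    exact mul_dvd_mul (hℓ.dvd_choose_self (by omega) hjℓ) (pow_dvd_pow ℓ (by nlinarith))
  · rw [Nat.choose_self, one_mul]
    exact pow_dvd_pow j (by nlinarith)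

theorem exists_one_add_smul_pow_eq {R : Type*} [Ring R] {ℓ q k N : ℕ}
    (h : ∀ j ∈ Ico 2 (q + 1), ℓ ^ N ∣ q.choose j * ℓ ^ (k * j)) (D : R) :
    ∃ F : R, (1 + ℓ ^ k • D) ^ q = 1 + (q * ℓ ^ k) • D + ℓ ^ N • F := by
  rcases q.eq_zero_or_pos with rfl | hq
  · exact ⟨0, by simp⟩
  choose! e he using h
  refine ⟨∑ j ∈ Ico 2 (q + 1), e j • D ^ j, ?_⟩
  have hterm : ∀ j, (ℓ ^ k • D) ^ j * 1 ^ (q - j) * (q.choose j : R) =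
      (q.choose j * ℓ ^ (k * j)) • D ^ j := fun j => by
    rw [smul_pow, one_pow, mul_one, ← nsmul_eq_mul', smul_smul, ← pow_mul, mul_comm]
  rw [add_comm 1, (Commute.one_right _).add_pow, ← sum_range_add_sum_Ico _ (by omega : 2 ≤ q + 1),
    smul_sum]
  simp only [hterm, sum_range_succ, sum_range_zero]
  rw [sum_congr rfl fun j hj => by rw [he j hj, mul_smul]]
  simp

theorem Nat.Coprime.exists_eq_nsmul_of_nsmul_eq_nsmul {M : Type*} [AddCommGroup M] {a b : ℕ}
    (hab : a.Coprime b) {x y : M} (h : a • x = b • y) : ∃ z, x = b • z := by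
  obtain ⟨u, v, huv⟩ := Nat.isCoprime_iff_coprime.2 hab
  refine ⟨u • y + v • x, ?_⟩
  calc x = (u * a + v * b : ℤ) • x := by rw [huv, one_smul]
    _ = u • (a • x) + v • (b • x) := by
      rw [add_smul, mul_smul, mul_smul, natCast_zsmul, natCast_zsmul]
    _ = b • (u • y + v • x) := by rw [h, smul_add, smul_comm u b, smul_comm v b]

theorem exists_eq_nsmul_of_one_add_smul_pow_eq_one {R : Type*} [Ring R] [IsAddTorsionFree R]
    {ℓ q k : ℕ} (hℓ : ℓ.Prime) (hℓ3 : 3 ≤ ℓ) (hq : q.Prime) (hk : 1 ≤ k) {D : R}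
    (h : (1 + ℓ ^ k • D) ^ q = 1) : ∃ E, D = ℓ • E := by
  by_cases hqℓ : q = ℓ
  · subst hqℓ
    obtain ⟨F, hF⟩ := exists_one_add_smul_pow_eq (R := R) (N := k + 2)
      (fun j hj => hq.pow_add_two_dvd_choose_mul_pow hℓ3 hk (mem_Ico.1 hj).1
        (Nat.lt_succ_iff.1 (mem_Ico.1 hj).2)) D
    refine ⟨-F, nsmul_right_injective (pow_ne_zero (k + 1) hq.ne_zero) ?_⟩
    rw [h] at hF
    linear_combination (norm := module) -hF
  · obtain ⟨F, hF⟩ := exists_one_add_smul_pow_eq (R := R) (N := k + 1)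
      (fun j hj => Nat.pow_succ_dvd_choose_mul_pow ℓ q hk (mem_Ico.1 hj).1) D
    refine ((Nat.coprime_primes hq hℓ).2 hqℓ).exists_eq_nsmul_of_nsmul_eq_nsmul (y := -F) ?_
    apply nsmul_right_injective (pow_ne_zero k hℓ.ne_zero)
    rw [h] at hF
    linear_combination (norm := module) -hF

instance {m n α : Type*} [AddMonoid α] [IsAddTorsionFree α] : IsAddTorsionFree (Matrix m n α) :=
  inferInstanceAs (IsAddTorsionFree (m → n → α))

namespace Matrix

variable {n : Type*} [DecidableEq n]

theorem eq_one_of_pow_prime_eq_one [Fintype n] {ℓ q : ℕ} (hℓ : ℓ.Prime) (hℓ3 : 3 ≤ ℓ)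
    (hq : q.Prime) {A : Matrix n n ℤ} (hA : A ^ q = 1) (hmod : ∃ D, A = 1 + ℓ • D) : A = 1 := by
  have hdesc : ∀ k, ∃ D, A = 1 + ℓ ^ (k + 1) • D := by
    intro k
    induction k with
    | zero => simpa using hmod
    | succ k ih =>
      obtain ⟨D, hD⟩ := ih
      obtain ⟨E, rfl⟩ :=
        exists_eq_nsmul_of_one_add_smul_pow_eq_one hℓ hℓ3 hq le_add_self (hD ▸ hA)
      exact ⟨E, by rw [hD, smul_smul, ← pow_succ]⟩
  ext i j
  have hdvd : ∀ k, (ℓ : ℤ) ^ (k + 1) ∣ A i j - (1 : Matrix n n ℤ) i j := fun k => by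
    obtain ⟨D, hD⟩ := hdesc k
    exact ⟨D i j, by
      rw [hD, add_apply, smul_apply, add_sub_cancel_left, nsmul_eq_mul, Nat.cast_pow]⟩
  rw [← sub_eq_zero]
  refine Int.eq_zero_of_dvd_of_natAbs_lt_natAbs
    (hdvd (A i j - (1 : Matrix n n ℤ) i j).natAbs) ?_
  rw [Int.natAbs_pow, Int.natAbs_natCast]
  exact (Nat.lt_pow_self hℓ.one_lt).trans (Nat.pow_lt_pow_right hℓ.one_lt (Nat.lt_succ_self _))

theorem exists_eq_one_add_nsmul_of_map_eq_one {ℓ : ℕ} {A : Matrix n n ℤ}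
    (h : A.map (Int.cast : ℤ → ZMod ℓ) = 1) : ∃ D, A = 1 + ℓ • D := by
  refine ⟨of fun i j => (A - 1) i j / ℓ, ext fun i j => ?_⟩
  have hdvd : (ℓ : ℤ) ∣ A i j - (1 : Matrix n n ℤ) i j := by
    rw [← ZMod.intCast_zmod_eq_zero_iff_dvd, Int.cast_sub, sub_eq_zero,
      ← Matrix.map_apply (f := Int.cast), ← Matrix.map_apply (f := Int.cast) (M := 1), h,
      Matrix.map_one _ Int.cast_zero Int.cast_one]
  simp [Int.mul_ediv_cancel' hdvd]

end Matrix

namespace Matrix.GeneralLinearGroup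

variable {n : Type*} [Fintype n] [DecidableEq n]

theorem eq_one_of_isOfFinOrder_of_map_eq_one {ℓ : ℕ} (hℓ : ℓ.Prime) (hℓ3 : 3 ≤ ℓ) {g : GL n ℤ}
    (hg : IsOfFinOrder g) (h : map (Int.castRingHom (ZMod ℓ)) g = 1) : g = 1 := by
  by_contra hg1
  obtain ⟨q, hq, hqdvd⟩ := Nat.exists_prime_and_dvd (orderOf_eq_one_iff.not.2 hg1)
  set g' := g ^ (orderOf g / q)
  have hg' : orderOf g' = q := orderOf_pow_orderOf_div hg.orderOf_pos.ne' hqdvd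
  have hg'pow : (g' : Matrix n n ℤ) ^ q = 1 := by
    rw [← Units.val_pow_eq_pow_val, ← hg', pow_orderOf_eq_one, Units.val_one]
  have hg'map : (g' : Matrix n n ℤ).map (Int.cast : ℤ → ZMod ℓ) = 1 :=
    congr_arg Units.val (show map (Int.castRingHom (ZMod ℓ)) g' = 1 by rw [map_pow, h, one_pow])
  have hg'one : g' = 1 := Units.ext <|
    eq_one_of_pow_prime_eq_one hℓ hℓ3 hq hg'pow (exists_eq_one_add_nsmul_of_map_eq_one hg'map)
  exact hq.one_lt.ne' (hg' ▸ orderOf_eq_one_iff.2 hg'one)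

theorem finite_of_forall_isOfFinOrder {G : Subgroup (GL n ℤ)} (hG : ∀ g ∈ G, IsOfFinOrder g) :
    Finite G := by
  let f := (map (Int.castRingHom (ZMod 3))).comp G.subtype
  refine Finite.of_injective f ((injective_iff_map_eq_one f).2 fun g hg => Subtype.ext ?_)
  exact eq_one_of_isOfFinOrder_of_map_eq_one Nat.prime_three le_rfl (hG g g.2) hg

end Matrix.GeneralLinearGroup

/-- A finite-order element of `GL(3,ℤ)` has order at most `6`; consequently any
subgroup of `GL(3,ℤ)` all of whose elements have finite order is finite. -/
theorem stmt3 :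
    (∀ h : Matrix.GeneralLinearGroup (Fin 3) ℤ, IsOfFinOrder h → orderOf h ≤ 6) ∧
    (∀ G : Subgroup (Matrix.GeneralLinearGroup (Fin 3) ℤ),
      (∀ g ∈ G, IsOfFinOrder g) → Finite G) :=
  ⟨fun _ hh => Matrix.GeneralLinearGroup.orderOf_le_six (by simp) hh,
    fun _ hG => Matrix.GeneralLinearGroup.finite_of_forall_isOfFinOrder hG⟩
end

section
/- Let C be a g-invariant symmetric trilinear form on a 3-dimensional real vector space with basis (w, w₁, w₂) where gw = w, gw₁ = w + w₁, gw₂ = w₁ + w₂. Then w² (as a quadratic-in-third-argument expression, i.e., C(w,w,x) for all x) satisfies: C(w,w₁,w₁)=C(w,w₁,w₂)=0, C(w,w,x)=0 for all x, C(w₁,w₁,w₁)=0, and C(w,w₂,w₂) = 2C(w₁,w₂,w₂) = −2C(w₁,w₁,w₂). -/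
/-!
Write `g = 1 + N`, so `N w = 0`, `N w₁ = w`, `N w₂ = w₁`. For each triple of basis vectors,
`C(ga, gb, gc) = C(a, b, c)` expands, by trilinearity and symmetry, into a linear relation among
the values of `C` on triples obtained by applying `N` to some of the entries. Taken in a suitable
order, these relations kill the values one by one or give the stated identities; the linear form
`C(w, w, ·)` then vanishes on the spanning set `{w, w₁, w₂}`, hence identically.
-/

section Trilinear

variable {K V : Type*} [Field K] [AddCommGroup V] [Module K V]
  {C : V →ₗ[K] V →ₗ[K] V →ₗ[K] K}

theorem trilinear_add_add_left (hsymm₁ : ∀ a b c : V, C a b c = C b a c) (x y z : V) :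
    C (x + y) (x + y) z = C x x z + 2 * C x y z + C y y z := by
  simp only [map_add, LinearMap.add_apply, hsymm₁ y x]
  ring

theorem trilinear_add_add_right (hsymm₂ : ∀ a b c : V, C a b c = C a c b) (x y z : V) :
    C z (x + y) (x + y) = C z x x + 2 * C z x y + C z y y := by
  simp only [map_add, LinearMap.add_apply, hsymm₂ z y x]
  ring

theorem trilinear_add_cube (hsymm₁ : ∀ a b c : V, C a b c = C b a c)
    (hsymm₂ : ∀ a b c : V, C a b c = C a c b) (x y : V) :
    C (x + y) (x + y) (x + y) = C x x x + 3 * C x x y + 3 * C x y y + C y y y := by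
  rw [trilinear_add_add_left hsymm₁]
  simp only [map_add, hsymm₂ x y x, hsymm₂ y y x, hsymm₁ y x y]
  ring

variable {g : V ≃ₗ[K] V}

theorem trilinear_apply_eq_zero_of_fixed (hinv : ∀ a b c : V, C (g a) (g b) (g c) = C a b c)
    {a b c x : V} (ha : g a = a) (hb : g b = b) (hc : g c = x + c) : C a b x = 0 := by
  have := hinv a b c
  rw [ha, hb, hc, map_add] at this
  simpa using this

theorem trilinear_apply_map_map_of_fixed (hinv : ∀ a b c : V, C (g a) (g b) (g c) = C a b c)
    {a : V} (ha : g a = a) (b c : V) : C a (g b) (g c) = C a b c := by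
  rw [← hinv a b c, ha]

theorem trilinear_relations_of_jordan_block [CharZero K]
    (hsymm₁ : ∀ a b c : V, C a b c = C b a c) (hsymm₂ : ∀ a b c : V, C a b c = C a c b)
    (hinv : ∀ a b c : V, C (g a) (g b) (g c) = C a b c) {w w₁ w₂ : V}
    (hgw : g w = w) (hgw₁ : g w₁ = w + w₁) (hgw₂ : g w₂ = w₁ + w₂) :
    C w w w = 0 ∧ C w w w₁ = 0 ∧ C w w w₂ = 0 ∧ C w w₁ w₁ = 0 ∧ C w w₁ w₂ = 0 ∧
      C w₁ w₁ w₁ = 0 ∧ C w w₂ w₂ = -2 * C w₁ w₁ w₂ ∧ C w₁ w₂ w₂ = -C w₁ w₁ w₂ := by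
  have hwww : C w w w = 0 := trilinear_apply_eq_zero_of_fixed hinv hgw hgw hgw₁
  have hww₁ : C w w w₁ = 0 := trilinear_apply_eq_zero_of_fixed hinv hgw hgw hgw₂
  have hw₁w₁ : C w w₁ w₁ = 0 := by
    have h := hinv w₁ w₁ w₁
    rw [hgw₁, trilinear_add_cube hsymm₁ hsymm₂] at h
    linear_combination (1 / 3 : K) * (h - hwww - 3 * hww₁)
  have hww₂ : C w w w₂ = 0 := by
    have h := trilinear_apply_map_map_of_fixed hinv hgw w₁ w₂
    rw [hgw₁, hgw₂] at h
    simp only [map_add, LinearMap.add_apply] at h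
    linear_combination h - hww₁ - hw₁w₁
  have hw₁w₂ : C w w₁ w₂ = 0 := by
    have h := trilinear_apply_map_map_of_fixed hinv hgw w₂ w₂
    rw [hgw₂, trilinear_add_add_right hsymm₂] at h
    linear_combination (1 / 2 : K) * (h - hw₁w₁)
  have h₁₁₁ : C w₁ w₁ w₁ = 0 := by
    have h := hinv w₁ w₁ w₂
    rw [hgw₁, hgw₂, trilinear_add_add_left hsymm₁] at h
    simp only [map_add] at h
    linear_combination h - hww₁ - hww₂ - 2 * hw₁w₁ - 2 * hw₁w₂
  have h₁₂₂ : C w₁ w₂ w₂ = -C w₁ w₁ w₂ := by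
    have h := hinv w₂ w₂ w₂
    rw [hgw₂, trilinear_add_cube hsymm₁ hsymm₂] at h
    linear_combination (1 / 3 : K) * (h - h₁₁₁)
  have hw₂₂ : C w w₂ w₂ = -2 * C w₁ w₁ w₂ := by
    have h := hinv w₁ w₂ w₂
    rw [hgw₁, hgw₂, map_add C, LinearMap.add_apply, LinearMap.add_apply,
      trilinear_add_add_right hsymm₂, trilinear_add_add_right hsymm₂] at h
    linear_combination h - hw₁w₁ - 2 * hw₁w₂ - h₁₁₁
  exact ⟨hwww, hww₁, hww₂, hw₁w₁, hw₁w₂, h₁₁₁, hw₂₂, h₁₂₂⟩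

end Trilinear

/-- Let `C` be a `g`-invariant symmetric trilinear form on a `3`-dimensional real
vector space spanned by `(w, w₁, w₂)` where `g w = w`, `g w₁ = w + w₁`,
`g w₂ = w₁ + w₂`.  Then `C(w,w₁,w₁) = C(w,w₁,w₂) = 0`, `C(w,w,x) = 0` for all `x`,
`C(w₁,w₁,w₁) = 0`, and `C(w,w₂,w₂) = 2 C(w₁,w₂,w₂) = −2 C(w₁,w₁,w₂)`. -/
theorem stmt14
    (V : Type*) [AddCommGroup V] [Module ℝ V]
    (g : V ≃ₗ[ℝ] V)
    (C : V →ₗ[ℝ] V →ₗ[ℝ] V →ₗ[ℝ] ℝ)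
    (hsymm₁ : ∀ a b c : V, C a b c = C b a c)
    (hsymm₂ : ∀ a b c : V, C a b c = C a c b)
    (hinv : ∀ a b c : V, C (g a) (g b) (g c) = C a b c)
    (w w₁ w₂ : V)
    (hspan : Submodule.span ℝ ({w, w₁, w₂} : Set V) = ⊤)
    (hgw : g w = w) (hgw₁ : g w₁ = w + w₁) (hgw₂ : g w₂ = w₁ + w₂) :
    C w w₁ w₁ = 0 ∧ C w w₁ w₂ = 0 ∧ (∀ x : V, C w w x = 0) ∧ C w₁ w₁ w₁ = 0 ∧
    C w w₂ w₂ = 2 * C w₁ w₂ w₂ ∧ C w w₂ w₂ = -2 * C w₁ w₁ w₂ := by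
  obtain ⟨hwww, hww₁, hww₂, hw₁w₁, hw₁w₂, h₁₁₁, hw₂₂, h₁₂₂⟩ :=
    trilinear_relations_of_jordan_block hsymm₁ hsymm₂ hinv hgw hgw₁ hgw₂
  have hsq : C w w = 0 := LinearMap.ext_on hspan (by simp [Set.EqOn, hwww, hww₁, hww₂])
  exact ⟨hw₁w₁, hw₁w₂, fun x => by simp [hsq], h₁₁₁,
    by linear_combination hw₂₂ - 2 * h₁₂₂, hw₂₂⟩
end

section
/- Let 𝓗 be the unipotent upper triangular 3×3 matrix with entries 𝓗₁₂ = a, 𝓗₂₃ = c, 𝓗₁₃ = d (and 1's on the diagonal), and let 𝓠 be the symmetric matrix with rows (0,0,E), (0,−E,E/2), (E,E/2,F) where E ≠ 0. If 𝓗ᵗ𝓠𝓗 = λ𝓠 for some scalar λ, then λ = 1, a = c, and d = a(a−1)/2. -/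
open Matrix

/-! Conjugating `Q` by the unipotent `H` leaves the entries `(0,2)`, `(1,2)`, `(2,2)` equal to
`E`, `E/2 + (a - c)E` and `F + (2d + c - c²)E`. Comparing them with `λE`, `λE/2` and `λF`
gives in turn `λ = 1`, `a = c` and `2d = a² - a`, since `E ≠ 0`. -/

theorem transpose_unitriangular_mul_mul_unitriangular {K : Type*} [Field K] (h2 : (2 : K) ≠ 0)
    (E F a c d : K) :
    (!![1, a, d; 0, 1, c; 0, 0, 1] : Matrix (Fin 3) (Fin 3) K)ᵀ *
        !![0, 0, E; 0, -E, E / 2; E, E / 2, F] * !![1, a, d; 0, 1, c; 0, 0, 1] =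
      !![0, 0, E;
        0, -E, E / 2 + (a - c) * E;
        E, E / 2 + (a - c) * E, F + (2 * d + c - c ^ 2) * E] := by
  ext i j
  fin_cases i <;> fin_cases j <;> simp [mul_apply, Fin.sum_univ_succ] <;> field_simp <;> ring

/-- Let `𝓗` be the unipotent upper triangular matrix with `𝓗₁₂ = a`, `𝓗₂₃ = c`,
`𝓗₁₃ = d` and `𝓠` the symmetric matrix with rows `(0,0,E), (0,−E,E/2), (E,E/2,F)`
with `E ≠ 0`.  If `𝓗ᵀ𝓠𝓗 = λ𝓠` for some scalar `λ`, then `λ = 1`, `a = c` and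
`d = a(a−1)/2`. -/
theorem stmt16
    (E F a c d l : ℝ) (hE : E ≠ 0)
    (H Q : Matrix (Fin 3) (Fin 3) ℝ)
    (hH : H = !![1, a, d; 0, 1, c; 0, 0, 1])
    (hQ : Q = !![0, 0, E; 0, -E, E / 2; E, E / 2, F])
    (heq : Hᵀ * Q * H = l • Q) :
    l = 1 ∧ a = c ∧ d = a * (a - 1) / 2 := by
  subst hH hQ
  rw [transpose_unitriangular_mul_mul_unitriangular two_ne_zero] at heq
  have h02 := congrFun (congrFun heq 0) 2
  have h12 := congrFun (congrFun heq 1) 2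
  have h22 := congrFun (congrFun heq 2) 2
  simp only [Fin.isValue, of_apply, cons_val', cons_val, cons_val_fin_one, cons_val_zero,
    Matrix.smul_apply, smul_eq_mul, cons_val_one] at h02 h12 h22
  have hl : l = 1 := mul_right_cancel₀ hE (by linarith : l * E = 1 * E)
  subst hl
  have hac : a = c := mul_right_cancel₀ hE (by linarith : a * E = c * E)
  subst hac
  have hd : 2 * d = a ^ 2 - a := mul_right_cancel₀ hE (by linarith : 2 * d * E = (a ^ 2 - a) * E)
  exact ⟨rfl, rfl, by linarith⟩
end
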